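/- (Closed-form DSO solution, evening.) Under the reduced-network assumptions for the evening-commute corridor network, the explicit collection (q_i, ρ_i, p_i) defined by q_i(t) = μ̂_i·1_{𝒯_i}(t), ρ_i = s(t_i^-) + c_i, and p_i(t) = ρ_i − s(t) − c_i − Σ_{j=1}^{i−1} p_j(t) for t ∈ 𝒯_i with p_i(t) = 0 otherwise, satisfies p_i(t) ≥ 0 for all i, t, is an evening pricing equilibrium (satisfies (E1), (E2), (E3)), and the departure-flow pattern (q_i) minimizes the social transport cost Σ_{i=1}^{N} ∫_0^T (s(t)+c_i)·r_i(t) dt over all feasible flow patterns (r_i). -/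

import Mathlib

/-!
Strict quasi-convexity makes each window `𝒯_i = [t_i^-, t_i^+]` exactly the part of `[0, T]`
where `s ≤ s(t_i^-)`; hence windows of increasing length are nested, with increasing levels.
The toll recursion then telescopes to `∑_{j ≤ i} p_j = (s(t_i^-) - s) · 1_{𝒯_i}`, which is
nonnegative and increasing in `i`: this gives `p ≥ 0` and (E1). By nesting, the tail flow
`∑_{j ≥ i} q_j` is `∑_{j ≥ i} μ̂_j = μ_i` on `𝒯_i` and at most `μ_i` elsewhere, which is (E2).

Optimality is weak duality. For a feasible `r`, (E1), `p ≥ 0` and the capacity constraints give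
`∑_i (s + c_i) r_i ≥ ∑_i ρ_i r_i - ∑_j p_j μ_j` at every instant, with equality for `q` by
complementary slackness; integrating, the `ρ`-terms agree since both patterns serve the demands.
-/

open MeasureTheory Finset Set
open scoped Classical

noncomputable section

/-- Basic corridor-network primitives: `N ≥ 1` bottlenecks, rush hour `[0,T]`,
capacities `μ`, demands `Q`, free-flow times `c`, and a continuous, strictly
quasi-convex schedule-delay function `s` with minimum `0` at `td ∈ (0,T)`. -/
def CorridorNet (N : ℕ) (T td : ℝ) (μ Q c : ℕ → ℝ) (s : ℝ → ℝ) : Prop :=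
  1 ≤ N ∧ 0 < T ∧ td ∈ Set.Ioo (0:ℝ) T ∧
  (∀ i ∈ Finset.Icc 1 N, 0 < μ i ∧ 0 < Q i ∧ 0 ≤ c i) ∧
  ContinuousOn s (Set.Icc 0 T) ∧ (∀ t ∈ Set.Icc (0:ℝ) T, 0 ≤ s t) ∧ s td = 0 ∧
  (∀ a ∈ Set.Icc (0:ℝ) T, ∀ b ∈ Set.Icc (0:ℝ) T, a ≠ b →
    ∀ l ∈ Set.Ioo (0:ℝ) 1, s (l * a + (1 - l) * b) < max (s a) (s b))

/-- Pricing equilibrium: bounded measurable nonnegative flows `q` and prices `p`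
with constants `ρ`, satisfying (E1), (E2), (E3). -/
def IsPricingEq (N : ℕ) (T : ℝ) (μ Q c : ℕ → ℝ) (s : ℝ → ℝ)
    (q p : ℕ → ℝ → ℝ) (ρ : ℕ → ℝ) : Prop :=
  (∀ i ∈ Finset.Icc 1 N, Measurable (q i) ∧ Measurable (p i)) ∧
  (∀ i ∈ Finset.Icc 1 N, ∃ M : ℝ, ∀ t ∈ Set.Icc (0:ℝ) T, q i t ≤ M ∧ p i t ≤ M) ∧
  (∀ i ∈ Finset.Icc 1 N, ∀ t ∈ Set.Icc (0:ℝ) T, 0 ≤ q i t ∧ 0 ≤ p i t) ∧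
  (∀ i ∈ Finset.Icc 1 N, ∀ t ∈ Set.Icc (0:ℝ) T,
    ρ i ≤ s t + c i + ∑ j ∈ Finset.Icc 1 i, p j t ∧
    (0 < q i t → s t + c i + ∑ j ∈ Finset.Icc 1 i, p j t = ρ i)) ∧
  (∀ i ∈ Finset.Icc 1 N, ∀ t ∈ Set.Icc (0:ℝ) T,
    (∑ j ∈ Finset.Icc i N, q j t) ≤ μ i ∧
    (0 < p i t → (∑ j ∈ Finset.Icc i N, q j t) = μ i)) ∧
  (∀ i ∈ Finset.Icc 1 N, ∫ t in (0:ℝ)..T, q i t = Q i)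

/-- `μ̂ i = μ i − μ (i+1)` for `i < N`, and `μ̂ N = μ N`. -/
def muhat (N : ℕ) (μ : ℕ → ℝ) (i : ℕ) : ℝ :=
  if i < N then μ i - μ (i + 1) else μ N

/-- Reduced-network assumptions: strictly decreasing capacities, strictly
increasing window lengths `T_i = Q_i/μ̂_i`, and windows `𝒯_i = [tm i, tp i] ⊆ (0,T)`
of length `T_i` with `s (tm i) = s (tp i)`. -/
def ReducedNet (N : ℕ) (T : ℝ) (μ Q : ℕ → ℝ) (s : ℝ → ℝ) (tm tp : ℕ → ℝ) : Prop :=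
  (∀ i, 1 ≤ i → i < N → μ (i + 1) < μ i) ∧ 0 < μ N ∧
  (∀ i, 1 ≤ i → i < N → Q i / muhat N μ i < Q (i + 1) / muhat N μ (i + 1)) ∧
  (∀ i ∈ Finset.Icc 1 N, 0 < tm i ∧ tp i < T ∧
    tp i - tm i = Q i / muhat N μ i ∧ s (tm i) = s (tp i))

/-- The explicit DSO collection: `q_i = μ̂_i·1_{𝒯_i}`, `ρ_i = s(t_i^-) + c_i`, and
`p_i(t) = ρ_i − s(t) − c_i − Σ_{j<i} p_j(t)` on `𝒯_i`, `0` otherwise. -/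
def ExplicitDSO (N : ℕ) (μ c : ℕ → ℝ) (s : ℝ → ℝ) (tm tp : ℕ → ℝ)
    (q p : ℕ → ℝ → ℝ) (ρ : ℕ → ℝ) : Prop :=
  (∀ i ∈ Finset.Icc 1 N, ∀ t : ℝ,
    q i t = if t ∈ Set.Icc (tm i) (tp i) then muhat N μ i else 0) ∧
  (∀ i ∈ Finset.Icc 1 N, ρ i = s (tm i) + c i) ∧
  (∀ i ∈ Finset.Icc 1 N, ∀ t : ℝ,
    p i t = if t ∈ Set.Icc (tm i) (tp i)
      then ρ i - s t - c i - ∑ j ∈ Finset.Icc 1 (i - 1), p j t else 0)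

/-- A feasible flow pattern: bounded measurable nonnegative flows respecting
the capacity constraints and the demand conservation. -/
def FeasibleFlow (N : ℕ) (T : ℝ) (μ Q : ℕ → ℝ) (r : ℕ → ℝ → ℝ) : Prop :=
  (∀ i ∈ Finset.Icc 1 N, Measurable (r i)) ∧
  (∀ i ∈ Finset.Icc 1 N, ∃ M : ℝ, ∀ t ∈ Set.Icc (0:ℝ) T, r i t ≤ M) ∧
  (∀ i ∈ Finset.Icc 1 N, ∀ t ∈ Set.Icc (0:ℝ) T, 0 ≤ r i t) ∧
  (∀ i ∈ Finset.Icc 1 N, ∀ t ∈ Set.Icc (0:ℝ) T, (∑ j ∈ Finset.Icc i N, r j t) ≤ μ i) ∧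
  (∀ i ∈ Finset.Icc 1 N, ∫ t in (0:ℝ)..T, r i t = Q i)

def StrictQuasiconvexOn (D : Set ℝ) (s : ℝ → ℝ) : Prop :=
  ∀ a ∈ D, ∀ b ∈ D, a ≠ b → ∀ l ∈ Ioo (0:ℝ) 1, s (l * a + (1 - l) * b) < max (s a) (s b)

structure IsLevelWindow (D : Set ℝ) (s : ℝ → ℝ) (a b : ℝ) : Prop where
  left_mem : a ∈ D
  right_mem : b ∈ D
  lt : a < b
  eq : s a = s b

namespace StrictQuasiconvexOn

variable {D : Set ℝ} {s : ℝ → ℝ}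

theorem lt_max_of_lt_of_lt (hs : StrictQuasiconvexOn D s) {x y z : ℝ} (hx : x ∈ D) (hz : z ∈ D)
    (hxy : x < y) (hyz : y < z) : s y < max (s x) (s z) := by
  have hxz : 0 < z - x := by linarith
  convert hs x hx z hz (hxy.trans hyz).ne ((z - y) / (z - x))
    ⟨div_pos (by linarith) hxz, (div_lt_one hxz).2 (by linarith)⟩ using 2
  field_simp
  ring

theorem le_of_mem_Icc (hs : StrictQuasiconvexOn D s) {a b t : ℝ} (ha : a ∈ D) (hb : b ∈ D)
    (hsab : s a = s b) (ht : t ∈ Icc a b) : s t ≤ s a := by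
  rcases ht.1.eq_or_lt with rfl | hat
  · rfl
  rcases ht.2.eq_or_lt with rfl | htb
  · exact hsab.ge
  simpa [← hsab] using (hs.lt_max_of_lt_of_lt ha hb hat htb).le

theorem mem_Icc_of_le (hs : StrictQuasiconvexOn D s) {a b t : ℝ} (hw : IsLevelWindow D s a b)
    (ht : t ∈ D) (hst : s t ≤ s a) : t ∈ Icc a b := by
  by_contra hnot
  rcases lt_or_ge t a with hta | hat
  · have := hs.lt_max_of_lt_of_lt ht hw.right_mem hta hw.lt
    rw [← hw.eq, lt_max_iff] at this
    exact this.elim hst.not_gt (lt_irrefl _)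
  · have hbt : b < t := not_le.1 fun htb => hnot ⟨hat, htb⟩
    have := hs.lt_max_of_lt_of_lt hw.left_mem ht hw.lt hbt
    rw [← hw.eq, lt_max_iff] at this
    exact this.elim (lt_irrefl _) hst.not_gt

/-- The window of lower level lies inside the other one, hence is the shorter one. -/
theorem Icc_subset_Icc_of_sub_lt (hs : StrictQuasiconvexOn D s) {a b a' b' : ℝ}
    (hw : IsLevelWindow D s a b) (hw' : IsLevelWindow D s a' b') (hlen : b - a < b' - a') :
    Icc a b ⊆ Icc a' b' := by
  rcases lt_or_ge (s a) (s a') with hlt | hle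
  · exact Icc_subset_Icc (hs.mem_Icc_of_le hw' hw.left_mem hlt.le).1
      (hs.mem_Icc_of_le hw' hw.right_mem (hw.eq ▸ hlt.le)).2
  · have h₁ := (hs.mem_Icc_of_le hw hw'.left_mem hle).1
    have h₂ := (hs.mem_Icc_of_le hw hw'.right_mem (hw'.eq ▸ hle)).2
    linarith

end StrictQuasiconvexOn

theorem sum_Icc_sum_Icc_mul (N : ℕ) (a b : ℕ → ℝ) :
    ∑ i ∈ Finset.Icc 1 N, (∑ j ∈ Finset.Icc 1 i, a j) * b i
      = ∑ j ∈ Finset.Icc 1 N, a j * ∑ i ∈ Finset.Icc j N, b i := by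
  simp_rw [Finset.sum_mul, Finset.mul_sum]
  exact Finset.sum_comm' fun i j => by simp only [Finset.mem_Icc]; omega

theorem sum_Icc_one_eq_sum_Icc_one_pred_add {i : ℕ} (hi : 1 ≤ i) (f : ℕ → ℝ) :
    ∑ j ∈ Finset.Icc 1 i, f j = ∑ j ∈ Finset.Icc 1 (i - 1), f j + f i := by
  obtain ⟨k, rfl⟩ : ∃ k, i = k + 1 := ⟨i - 1, by omega⟩
  rw [Finset.sum_Icc_succ_top (by omega), Nat.add_sub_cancel]

theorem sum_muhat_Icc {N : ℕ} (μ : ℕ → ℝ) {i : ℕ} (hi : i ≤ N) :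
    ∑ j ∈ Finset.Icc i N, muhat N μ j = μ i := by
  induction hi using Nat.decreasingInduction with
  | self => simp [muhat]
  | of_succ k hk ih =>
    rw [← Finset.add_sum_Ioc_eq_sum_Icc hk.le, ← Finset.Icc_add_one_left_eq_Ioc, ih, muhat,
      if_pos hk]
    ring

theorem intervalIntegrable_of_bounded {f : ℝ → ℝ} {T M : ℝ} (hT : 0 ≤ T) (hf : Measurable f)
    (hbd : ∀ t ∈ Icc 0 T, 0 ≤ f t ∧ f t ≤ M) : IntervalIntegrable f volume 0 T := by
  rw [intervalIntegrable_iff_integrableOn_Icc_of_le hT]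
  refine Measure.integrableOn_of_bounded (M := M) measure_Icc_lt_top.ne hf.aestronglyMeasurable
    (ae_restrict_of_forall_mem measurableSet_Icc fun t ht => ?_)
  rw [Real.norm_eq_abs, abs_of_nonneg (hbd t ht).1]
  exact (hbd t ht).2

theorem intervalIntegral_indicator_Icc_const {a b T : ℝ} (x : ℝ) (ha : 0 < a) (hab : a ≤ b)
    (hbT : b ≤ T) : ∫ t in (0:ℝ)..T, (Icc a b).indicator (fun _ => x) t = (b - a) * x := by
  rw [intervalIntegral.integral_of_le (by linarith), integral_indicator_const _ measurableSet_Icc,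
    measureReal_restrict_apply measurableSet_Icc,
    Set.inter_eq_left.2 (Icc_subset_Ioc ha hbT), Real.volume_real_Icc_of_le hab, smul_eq_mul]

/-- Weak duality at one instant, with `κ i = s t + c i`. -/
theorem sum_mul_add_sum_mul_sub_le {N : ℕ} {κ ρ μ q r p : ℕ → ℝ}
    (hE1 : ∀ i ∈ Finset.Icc 1 N, ρ i ≤ κ i + ∑ j ∈ Finset.Icc 1 i, p j)
    (hE1q : ∀ i ∈ Finset.Icc 1 N, 0 < q i → κ i + ∑ j ∈ Finset.Icc 1 i, p j = ρ i)
    (hE2 : ∀ i ∈ Finset.Icc 1 N, 0 < p i → ∑ j ∈ Finset.Icc i N, q j = μ i)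
    (hq : ∀ i ∈ Finset.Icc 1 N, 0 ≤ q i) (hp : ∀ i ∈ Finset.Icc 1 N, 0 ≤ p i)
    (hr : ∀ i ∈ Finset.Icc 1 N, 0 ≤ r i)
    (hcap : ∀ i ∈ Finset.Icc 1 N, ∑ j ∈ Finset.Icc i N, r j ≤ μ i) :
    ∑ i ∈ Finset.Icc 1 N, κ i * q i + ∑ i ∈ Finset.Icc 1 N, ρ i * (r i - q i)
      ≤ ∑ i ∈ Finset.Icc 1 N, κ i * r i := by
  have hsplit : ∀ f : ℕ → ℝ, ∑ i ∈ Finset.Icc 1 N, (ρ i - ∑ j ∈ Finset.Icc 1 i, p j) * f i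
      = ∑ i ∈ Finset.Icc 1 N, ρ i * f i - ∑ j ∈ Finset.Icc 1 N, p j * ∑ i ∈ Finset.Icc j N, f i :=
    fun f => by rw [← sum_Icc_sum_Icc_mul, ← Finset.sum_sub_distrib]; simp only [sub_mul]
  have hq_cost : ∑ i ∈ Finset.Icc 1 N, κ i * q i
      = ∑ i ∈ Finset.Icc 1 N, ρ i * q i - ∑ j ∈ Finset.Icc 1 N, p j * μ j := by
    calc ∑ i ∈ Finset.Icc 1 N, κ i * q i
        = ∑ i ∈ Finset.Icc 1 N, (ρ i - ∑ j ∈ Finset.Icc 1 i, p j) * q i := by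
          refine Finset.sum_congr rfl fun i hi => ?_
          rcases (hq i hi).eq_or_lt with h | h
          · rw [← h, mul_zero, mul_zero]
          · rw [← hE1q i hi h]; ring
      _ = _ := by
          rw [hsplit]
          congr 1
          refine Finset.sum_congr rfl fun j hj => ?_
          rcases (hp j hj).eq_or_lt with h | h
          · rw [← h, zero_mul, zero_mul]
          · rw [hE2 j hj h]
  have hr_cost : ∑ i ∈ Finset.Icc 1 N, ρ i * r i - ∑ j ∈ Finset.Icc 1 N, p j * μ j
      ≤ ∑ i ∈ Finset.Icc 1 N, κ i * r i := by
    calc _ ≤ ∑ i ∈ Finset.Icc 1 N, ρ i * r i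
            - ∑ j ∈ Finset.Icc 1 N, p j * ∑ i ∈ Finset.Icc j N, r i := by
          refine sub_le_sub_left (Finset.sum_le_sum fun j hj => ?_) _
          exact mul_le_mul_of_nonneg_left (hcap j hj) (hp j hj)
      _ = ∑ i ∈ Finset.Icc 1 N, (ρ i - ∑ j ∈ Finset.Icc 1 i, p j) * r i := (hsplit r).symm
      _ ≤ _ := Finset.sum_le_sum fun i hi =>
          mul_le_mul_of_nonneg_right (by linarith [hE1 i hi]) (hr i hi)
  have hρ : ∑ i ∈ Finset.Icc 1 N, ρ i * (r i - q i)
      = ∑ i ∈ Finset.Icc 1 N, ρ i * r i - ∑ i ∈ Finset.Icc 1 N, ρ i * q i := by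
    rw [← Finset.sum_sub_distrib]; simp only [mul_sub]
  linarith

/-- Integrate the instantaneous weak duality; the `ρ`-terms vanish because `q` and `r` serve the
same demands. -/
theorem IsPricingEq.cost_le {N : ℕ} {T : ℝ} {μ Q c : ℕ → ℝ} {s : ℝ → ℝ} {q p : ℕ → ℝ → ℝ}
    {ρ : ℕ → ℝ} (heq : IsPricingEq N T μ Q c s q p ρ) (hT : 0 ≤ T)
    (hs : ContinuousOn s (Icc 0 T)) {r : ℕ → ℝ → ℝ} (hr : FeasibleFlow N T μ Q r) :
    ∑ i ∈ Finset.Icc 1 N, ∫ t in (0:ℝ)..T, (s t + c i) * q i t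
      ≤ ∑ i ∈ Finset.Icc 1 N, ∫ t in (0:ℝ)..T, (s t + c i) * r i t := by
  obtain ⟨hqpm, hqpb, hqpn, hE1, hE2, hqQ⟩ := heq
  obtain ⟨hrm, hrb, hrn, hcap, hrQ⟩ := hr
  have hqI : ∀ i ∈ Finset.Icc 1 N, IntervalIntegrable (q i) volume 0 T := fun i hi => by
    obtain ⟨M, hM⟩ := hqpb i hi
    exact intervalIntegrable_of_bounded hT (hqpm i hi).1 fun t ht =>
      ⟨(hqpn i hi t ht).1, (hM t ht).1⟩
  have hrI : ∀ i ∈ Finset.Icc 1 N, IntervalIntegrable (r i) volume 0 T := fun i hi => by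
    obtain ⟨M, hM⟩ := hrb i hi
    exact intervalIntegrable_of_bounded hT (hrm i hi) fun t ht => ⟨hrn i hi t ht, hM t ht⟩
  have hcostI : ∀ (i : ℕ) {f : ℝ → ℝ}, IntervalIntegrable f volume 0 T →
      IntervalIntegrable (fun t => (s t + c i) * f t) volume 0 T := fun i f hf =>
    hf.continuousOn_mul ((hs.add continuousOn_const).mono (uIcc_of_le hT).subset)
  have hρI : ∀ i ∈ Finset.Icc 1 N, IntervalIntegrable (fun t => ρ i * (r i t - q i t)) volume 0 T :=
    fun i hi => ((hrI i hi).sub (hqI i hi)).const_mul (ρ i)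
  have hρ : ∫ t in (0:ℝ)..T, ∑ i ∈ Finset.Icc 1 N, ρ i * (r i t - q i t) = 0 := by
    rw [intervalIntegral.integral_finsetSum hρI]
    refine Finset.sum_eq_zero fun i hi => ?_
    rw [intervalIntegral.integral_const_mul, intervalIntegral.integral_sub (hrI i hi) (hqI i hi),
      hrQ i hi, hqQ i hi, sub_self, mul_zero]
  have hsumI : ∀ {f : ℕ → ℝ → ℝ}, (∀ i ∈ Finset.Icc 1 N, IntervalIntegrable (f i) volume 0 T) →
      IntervalIntegrable (fun t => ∑ i ∈ Finset.Icc 1 N, f i t) volume 0 T := fun hf => by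
    simpa only [Finset.sum_fn] using IntervalIntegrable.sum _ hf
  have hqcI := hsumI fun i hi => hcostI i (hqI i hi)
  have hρsI := hsumI hρI
  calc ∑ i ∈ Finset.Icc 1 N, ∫ t in (0:ℝ)..T, (s t + c i) * q i t
      = (∫ t in (0:ℝ)..T, ∑ i ∈ Finset.Icc 1 N, (s t + c i) * q i t)
          + ∫ t in (0:ℝ)..T, ∑ i ∈ Finset.Icc 1 N, ρ i * (r i t - q i t) := by
        rw [hρ, add_zero, intervalIntegral.integral_finsetSum fun i hi => hcostI i (hqI i hi)]
    _ = ∫ t in (0:ℝ)..T, (∑ i ∈ Finset.Icc 1 N, (s t + c i) * q i t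
          + ∑ i ∈ Finset.Icc 1 N, ρ i * (r i t - q i t)) :=
        (intervalIntegral.integral_add hqcI hρsI).symm
    _ ≤ ∫ t in (0:ℝ)..T, ∑ i ∈ Finset.Icc 1 N, (s t + c i) * r i t :=
        intervalIntegral.integral_mono_on hT (hqcI.add hρsI)
          (hsumI fun i hi => hcostI i (hrI i hi)) fun t ht =>
        sum_mul_add_sum_mul_sub_le (fun i hi => (hE1 i hi t ht).1)
          (fun i hi => (hE1 i hi t ht).2) (fun i hi => (hE2 i hi t ht).2)
          (fun i hi => (hqpn i hi t ht).1) (fun i hi => (hqpn i hi t ht).2)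
          (fun i hi => hrn i hi t ht) fun i hi => hcap i hi t ht
    _ = _ := intervalIntegral.integral_finsetSum fun i hi => hcostI i (hrI i hi)

/-- The cumulative toll `∑_{j ≤ i} p_j` of the explicit solution, for `[a, b] = 𝒯_i`. -/
def windowPrice (s : ℝ → ℝ) (a b : ℝ) : ℝ → ℝ :=
  (Icc a b).indicator fun t => s a - s t

section windowPrice

variable {D : Set ℝ} {s : ℝ → ℝ} {a b a' b' : ℝ}

theorem add_windowPrice_of_mem {t : ℝ} (ht : t ∈ Icc a b) : s t + windowPrice s a b t = s a := by
  rw [windowPrice, indicator_of_mem ht]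
  ring

theorem windowPrice_nonneg (hs : StrictQuasiconvexOn D s) (hw : IsLevelWindow D s a b) (t : ℝ) :
    0 ≤ windowPrice s a b t :=
  indicator_nonneg (fun _ ht => sub_nonneg.2 (hs.le_of_mem_Icc hw.left_mem hw.right_mem hw.eq ht)) t

theorem windowPrice_le_windowPrice (hs : StrictQuasiconvexOn D s) (hw : IsLevelWindow D s a b)
    (hw' : IsLevelWindow D s a' b') (hsub : Icc a b ⊆ Icc a' b') (t : ℝ) :
    windowPrice s a b t ≤ windowPrice s a' b' t := by
  by_cases ht : t ∈ Icc a b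
  · have hlevel := hs.le_of_mem_Icc hw'.left_mem hw'.right_mem hw'.eq (hsub ⟨le_rfl, hw.lt.le⟩)
    rw [windowPrice, windowPrice, indicator_of_mem ht, indicator_of_mem (hsub ht)]
    linarith
  · rw [windowPrice, indicator_of_notMem ht]
    exact windowPrice_nonneg hs hw' t

theorem windowPrice_le (hab : a ≤ b) (hs0 : ∀ t ∈ Icc a b, 0 ≤ s t) (t : ℝ) :
    windowPrice s a b t ≤ s a :=
  indicator_apply_le' (fun ht => sub_le_self _ (hs0 t ht)) fun _ => hs0 a ⟨le_rfl, hab⟩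

theorem le_add_windowPrice (hs : StrictQuasiconvexOn D s) (hw : IsLevelWindow D s a b) {t : ℝ}
    (ht : t ∈ D) : s a ≤ s t + windowPrice s a b t := by
  by_cases hmem : t ∈ Icc a b
  · rw [add_windowPrice_of_mem hmem]
  · rw [windowPrice, indicator_of_notMem hmem, add_zero]
    exact le_of_not_ge fun hst => hmem (hs.mem_Icc_of_le hw ht hst)

theorem measurable_windowPrice (hs : ContinuousOn s (Icc a b)) :
    Measurable (windowPrice s a b) := by
  rw [windowPrice, ← piecewise_eq_indicator]
  exact (continuousOn_const.sub hs).measurable_piecewise continuousOn_const measurableSet_Icc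

end windowPrice

section ReducedNet

variable {N : ℕ} {T : ℝ} {μ Q : ℕ → ℝ} {s : ℝ → ℝ} {tm tp : ℕ → ℝ}

theorem ReducedNet.muhat_pos (hred : ReducedNet N T μ Q s tm tp) {i : ℕ}
    (hi : i ∈ Finset.Icc 1 N) : 0 < muhat N μ i := by
  obtain ⟨hμ, hμN, -, -⟩ := hred
  unfold muhat
  split_ifs with h
  · linarith [hμ i (Finset.mem_Icc.1 hi).1 h]
  · exact hμN

theorem ReducedNet.isLevelWindow (hred : ReducedNet N T μ Q s tm tp)
    (hQ : ∀ i ∈ Finset.Icc 1 N, 0 < Q i) {i : ℕ} (hi : i ∈ Finset.Icc 1 N) :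
    IsLevelWindow (Icc 0 T) s (tm i) (tp i) := by
  obtain ⟨h0, hT, hlen, heq⟩ := hred.2.2.2 i hi
  have hlt : tm i < tp i := by
    linarith [hlen ▸ div_pos (hQ i hi) (hred.muhat_pos hi)]
  exact ⟨⟨h0.le, by linarith⟩, ⟨by linarith, hT.le⟩, hlt, heq⟩

theorem ReducedNet.monotoneOn_window (hred : ReducedNet N T μ Q s tm tp)
    (hs : StrictQuasiconvexOn (Icc 0 T) s) (hQ : ∀ i ∈ Finset.Icc 1 N, 0 < Q i) :
    MonotoneOn (fun i => Icc (tm i) (tp i)) (Set.Icc 1 N) := by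
  refine monotoneOn_of_le_succ ordConnected_Icc fun i _ hi hi' => ?_
  simp only [Order.succ_eq_add_one, Set.mem_Icc] at hi hi' ⊢
  have hwin := fun j (hj : j ∈ Set.Icc 1 N) => hred.isLevelWindow hQ (Finset.mem_Icc.2 hj)
  refine hs.Icc_subset_Icc_of_sub_lt (hwin i hi) (hwin (i + 1) hi') ?_
  obtain ⟨-, -, hlen, -⟩ := hred.2.2.2 i (Finset.mem_Icc.2 hi)
  obtain ⟨-, -, hlen', -⟩ := hred.2.2.2 (i + 1) (Finset.mem_Icc.2 hi')
  rw [hlen, hlen']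
  exact hred.2.2.1 i hi.1 (by omega)

end ReducedNet

namespace ExplicitDSO

variable {N : ℕ} {T td : ℝ} {μ Q c : ℕ → ℝ} {s : ℝ → ℝ} {tm tp : ℕ → ℝ} {q p : ℕ → ℝ → ℝ}
  {ρ : ℕ → ℝ}

theorem q_eq_indicator (hdso : ExplicitDSO N μ c s tm tp q p ρ) {i : ℕ}
    (hi : i ∈ Finset.Icc 1 N) : q i = (Icc (tm i) (tp i)).indicator fun _ => muhat N μ i :=
  funext fun t => by rw [hdso.1 i hi t, indicator_apply]

theorem mem_Icc_of_pos (hdso : ExplicitDSO N μ c s tm tp q p ρ) {i : ℕ}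
    (hi : i ∈ Finset.Icc 1 N) {t : ℝ} (hpos : 0 < p i t) : t ∈ Icc (tm i) (tp i) := by
  by_contra ht
  rw [hdso.2.2 i hi t, if_neg ht] at hpos
  exact lt_irrefl _ hpos

/-- The recursion defining the tolls telescopes because the earlier windows are nested in `𝒯_i`. -/
theorem sum_p_eq_windowPrice (hdso : ExplicitDSO N μ c s tm tp q p ρ)
    (hW : MonotoneOn (fun i => Icc (tm i) (tp i)) (Set.Icc 1 N)) {i : ℕ}
    (hi : i ∈ Finset.Icc 1 N) (t : ℝ) :
    ∑ j ∈ Finset.Icc 1 i, p j t = windowPrice s (tm i) (tp i) t := by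
  obtain ⟨hi1, hiN⟩ := Finset.mem_Icc.1 hi
  induction i, hi1 using Nat.le_induction with
  | base =>
    simp only [Finset.Icc_self, Finset.sum_singleton, hdso.2.2 1 hi t, hdso.2.1 1 hi, windowPrice,
      indicator_apply, Nat.sub_self, Finset.Icc_eq_empty_of_lt, zero_lt_one, Finset.sum_empty]
    split_ifs <;> ring
  | succ k hk ih =>
    have hk' : k ∈ Finset.Icc 1 N := Finset.mem_Icc.2 ⟨hk, by omega⟩
    rw [Finset.sum_Icc_succ_top (by omega), hdso.2.2 _ hi t, hdso.2.1 _ hi, Nat.add_sub_cancel,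
      ih hk' (by omega)]
    by_cases ht : t ∈ Icc (tm (k + 1)) (tp (k + 1))
    · simp only [windowPrice, ht, if_true, indicator_of_mem ht]
      ring
    · have ht' : t ∉ Icc (tm k) (tp k) := fun h =>
        ht (hW (Finset.mem_Icc.1 hk') (Finset.mem_Icc.1 hi) (Nat.le_succ k) h)
      simp only [windowPrice, ht, ht', if_false, indicator_of_notMem, not_false_eq_true, add_zero]

theorem p_eq_sub (hdso : ExplicitDSO N μ c s tm tp q p ρ)
    (hW : MonotoneOn (fun i => Icc (tm i) (tp i)) (Set.Icc 1 N)) {i : ℕ}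
    (hi : i ∈ Finset.Icc 1 N) (t : ℝ) :
    p i t = windowPrice s (tm i) (tp i) t - ∑ j ∈ Finset.Icc 1 (i - 1), p j t := by
  rw [← hdso.sum_p_eq_windowPrice hW hi,
    sum_Icc_one_eq_sum_Icc_one_pred_add (Finset.mem_Icc.1 hi).1]
  ring

theorem p_mem_Icc (hdso : ExplicitDSO N μ c s tm tp q p ρ) {D : Set ℝ}
    (hs : StrictQuasiconvexOn D s) (hwin : ∀ i ∈ Finset.Icc 1 N, IsLevelWindow D s (tm i) (tp i))
    (hW : MonotoneOn (fun i => Icc (tm i) (tp i)) (Set.Icc 1 N)) {i : ℕ}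
    (hi : i ∈ Finset.Icc 1 N) (t : ℝ) : p i t ∈ Icc 0 (windowPrice s (tm i) (tp i) t) := by
  rw [hdso.p_eq_sub hW hi]
  obtain ⟨hi1, hiN⟩ := Finset.mem_Icc.1 hi
  rcases hi1.eq_or_lt with rfl | hi2
  · simp [windowPrice_nonneg hs (hwin 1 hi) t]
  · have hi' : i - 1 ∈ Finset.Icc 1 N := Finset.mem_Icc.2 ⟨by omega, by omega⟩
    rw [hdso.sum_p_eq_windowPrice hW hi']
    exact ⟨sub_nonneg.2 (windowPrice_le_windowPrice hs (hwin _ hi') (hwin i hi)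
        (hW (Finset.mem_Icc.1 hi') (Finset.mem_Icc.1 hi) (Nat.sub_le i 1)) t),
      sub_le_self _ (windowPrice_nonneg hs (hwin _ hi') t)⟩

theorem measurable_p (hdso : ExplicitDSO N μ c s tm tp q p ρ) {D : Set ℝ} (hD : D.OrdConnected)
    (hcont : ContinuousOn s D) (hwin : ∀ i ∈ Finset.Icc 1 N, IsLevelWindow D s (tm i) (tp i))
    (hW : MonotoneOn (fun i => Icc (tm i) (tp i)) (Set.Icc 1 N)) {i : ℕ}
    (hi : i ∈ Finset.Icc 1 N) : Measurable (p i) := by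
  induction i using Nat.strong_induction_on with
  | _ i ih =>
    have hsi := hcont.mono (hD.out (hwin i hi).left_mem (hwin i hi).right_mem)
    rw [funext (hdso.p_eq_sub hW hi)]
    refine (measurable_windowPrice hsi).sub (Finset.measurable_sum _ fun j hj => ?_)
    obtain ⟨hj1, hj⟩ := Finset.mem_Icc.1 hj
    have hiN := (Finset.mem_Icc.1 hi).2
    exact ih j (by omega) (Finset.mem_Icc.2 ⟨hj1, by omega⟩)

theorem rho_le_and_eq_of_q_pos (hdso : ExplicitDSO N μ c s tm tp q p ρ) {D : Set ℝ}
    (hs : StrictQuasiconvexOn D s)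
    (hwin : ∀ i ∈ Finset.Icc 1 N, IsLevelWindow D s (tm i) (tp i))
    (hW : MonotoneOn (fun i => Icc (tm i) (tp i)) (Set.Icc 1 N)) {i : ℕ}
    (hi : i ∈ Finset.Icc 1 N) {t : ℝ} (ht : t ∈ D) :
    ρ i ≤ s t + c i + ∑ j ∈ Finset.Icc 1 i, p j t ∧
      (0 < q i t → s t + c i + ∑ j ∈ Finset.Icc 1 i, p j t = ρ i) := by
  rw [hdso.sum_p_eq_windowPrice hW hi, hdso.2.1 i hi]
  refine ⟨by linarith [le_add_windowPrice hs (hwin i hi) ht], fun hq => ?_⟩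
  rw [hdso.q_eq_indicator hi] at hq
  linarith [add_windowPrice_of_mem (s := s) (mem_of_indicator_ne_zero hq.ne')]

theorem sum_q_le_and_eq_of_p_pos (hdso : ExplicitDSO N μ c s tm tp q p ρ)
    (hμ : ∀ i ∈ Finset.Icc 1 N, 0 ≤ muhat N μ i)
    (hW : MonotoneOn (fun i => Icc (tm i) (tp i)) (Set.Icc 1 N)) {i : ℕ}
    (hi : i ∈ Finset.Icc 1 N) (t : ℝ) :
    ∑ j ∈ Finset.Icc i N, q j t ≤ μ i ∧ (0 < p i t → ∑ j ∈ Finset.Icc i N, q j t = μ i) := by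
  obtain ⟨hi1, hiN⟩ := Finset.mem_Icc.1 hi
  have hj : ∀ j ∈ Finset.Icc i N, j ∈ Finset.Icc 1 N := fun j hj => by
    simp only [Finset.mem_Icc] at hj ⊢; omega
  rw [← sum_muhat_Icc μ hiN]
  refine ⟨Finset.sum_le_sum fun j hji => ?_, fun hp => Finset.sum_congr rfl fun j hji => ?_⟩
  · rw [hdso.q_eq_indicator (hj j hji)]
    exact indicator_apply_le' (fun _ => le_rfl) fun _ => hμ j (hj j hji)
  · rw [hdso.q_eq_indicator (hj j hji), indicator_of_mem]
    exact hW (Finset.mem_Icc.1 hi) (Finset.mem_Icc.1 (hj j hji)) (Finset.mem_Icc.1 hji).1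
      (hdso.mem_Icc_of_pos hi hp)

theorem integral_q (hdso : ExplicitDSO N μ c s tm tp q p ρ)
    (hred : ReducedNet N T μ Q s tm tp) (hQ : ∀ i ∈ Finset.Icc 1 N, 0 < Q i) {i : ℕ}
    (hi : i ∈ Finset.Icc 1 N) : ∫ t in (0:ℝ)..T, q i t = Q i := by
  obtain ⟨h0, hT, hlen, -⟩ := hred.2.2.2 i hi
  rw [hdso.q_eq_indicator hi,
    intervalIntegral_indicator_Icc_const _ h0 (hred.isLevelWindow hQ hi).lt.le hT.le, hlen,
    div_mul_cancel₀ _ (hred.muhat_pos hi).ne']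

theorem isPricingEq (hnet : CorridorNet N T td μ Q c s)
    (hred : ReducedNet N T μ Q s tm tp) (hdso : ExplicitDSO N μ c s tm tp q p ρ) :
    IsPricingEq N T μ Q c s q p ρ := by
  obtain ⟨-, -, -, hpos, hcont, hs0, -, hs⟩ := hnet
  have hQ : ∀ i ∈ Finset.Icc 1 N, 0 < Q i := fun i hi => (hpos i hi).2.1
  have hwin : ∀ i ∈ Finset.Icc 1 N, IsLevelWindow (Icc 0 T) s (tm i) (tp i) :=
    fun i hi => hred.isLevelWindow hQ hi
  have hW := hred.monotoneOn_window hs hQ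
  have hμ : ∀ i ∈ Finset.Icc 1 N, 0 ≤ muhat N μ i := fun i hi => (hred.muhat_pos hi).le
  have hq : ∀ i ∈ Finset.Icc 1 N, ∀ t, q i t ∈ Icc 0 (muhat N μ i) := fun i hi t => by
    rw [hdso.q_eq_indicator hi]
    exact ⟨indicator_nonneg (fun _ _ => hμ i hi) t,
      indicator_apply_le' (fun _ => le_rfl) fun _ => hμ i hi⟩
  have hp_le : ∀ i ∈ Finset.Icc 1 N, ∀ t, p i t ≤ s (tm i) := fun i hi t =>
    (hdso.p_mem_Icc hs hwin hW hi t).2.trans <| windowPrice_le (hwin i hi).lt.le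
      (fun t ht => hs0 t (ordConnected_Icc.out (hwin i hi).left_mem (hwin i hi).right_mem ht)) t
  refine ⟨fun i hi => ⟨?_, hdso.measurable_p ordConnected_Icc hcont hwin hW hi⟩,
    fun i hi => ⟨muhat N μ i + s (tm i), fun t _ => ⟨?_, ?_⟩⟩,
    fun i hi t _ => ⟨(hq i hi t).1, (hdso.p_mem_Icc hs hwin hW hi t).1⟩,
    fun i hi t ht => hdso.rho_le_and_eq_of_q_pos hs hwin hW hi ht,
    fun i hi t _ => hdso.sum_q_le_and_eq_of_p_pos hμ hW hi t,
    fun i hi => hdso.integral_q hred hQ hi⟩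
  · rw [hdso.q_eq_indicator hi]
    exact measurable_const.indicator measurableSet_Icc
  · linarith [(hq i hi t).2, hs0 _ (hwin i hi).left_mem]
  · linarith [hp_le i hi t, hμ i hi]

end ExplicitDSO

/-- closed-form DSO solution, evening: in the evening commute
(single origin, destinations `i = 1,…,N`, `q i` the origin departure flow bound
for destination `i`), the explicit collection is nonnegatively priced, is an
evening pricing equilibrium, and its departure-flow pattern minimizes the
social transport cost over all feasible flow patterns. -/
theorem stmt16 (N : ℕ) (T td : ℝ) (μ Q c : ℕ → ℝ) (s : ℝ → ℝ)
    (tm tp : ℕ → ℝ) (q p : ℕ → ℝ → ℝ) (ρ : ℕ → ℝ)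
    (hnet : CorridorNet N T td μ Q c s)
    (hred : ReducedNet N T μ Q s tm tp)
    (hdso : ExplicitDSO N μ c s tm tp q p ρ)
    :
    (∀ i ∈ Finset.Icc 1 N, ∀ t ∈ Set.Icc (0:ℝ) T, 0 ≤ p i t) ∧
    IsPricingEq N T μ Q c s q p ρ ∧
    (∀ r : ℕ → ℝ → ℝ, FeasibleFlow N T μ Q r →
      (∑ i ∈ Finset.Icc 1 N, ∫ t in (0:ℝ)..T, (s t + c i) * q i t) ≤
      (∑ i ∈ Finset.Icc 1 N, ∫ t in (0:ℝ)..T, (s t + c i) * r i t)) := by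
  have heq := hdso.isPricingEq hnet hred
  obtain ⟨-, hT, -, -, hcont, -⟩ := hnet
  exact ⟨fun i hi t ht => (heq.2.2.1 i hi t ht).2, heq, fun r hr => heq.cost_le hT.le hcont hr⟩
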